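/- Under the same setup: X a K-component identity-covariance GMM with centers μ_k*, weights π_k, λ ∈ (0,1/2), R_min > √((2/(1−2λ)) log θ), and μ ∈ U_λ. Then E_{X~N(μ_i*, I_d)}[w_i(X,μ)] ≥ 1 − (K−1)(1+θ) e^{-c(λ) R_i²}, where R_i = min_{j≠i} ‖μ_j*−μ_i*‖ and c(λ) = (1/8)((1−2λ)/(1+2λ))². -/

import Mathlib

/-!
For `j ≠ i` and `0 ≤ β ≤ 1`, `w_j ≤ w_j^β ≤ (π_j/π_i)^β exp(β (‖x - μ_i‖² - ‖x - μ_j‖²)/2)`, and the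
exponent is affine in `x`. Against `N(μ_i*, I)` completing the square integrates it exactly:
`E[w_j] ≤ θ exp(β m + β² ‖μ_j - μ_i‖²/2)` with `m = (‖μ_i* - μ_i‖² - ‖μ_i* - μ_j‖²)/2`.
On `U_λ`, with `D = ‖μ_j* - μ_i*‖ ≥ R_i`, the triangle inequality gives `m ≤ -(1 - 2λ) D²/2` and
`‖μ_j - μ_i‖ ≤ (1 + 2λ) D`, and `β = (1 - 2λ)/(2 (1 + 2λ)²)` makes the exponent at most
`-c(λ) R_i²`. Since the weights sum to one, `E[w_i] = 1 - Σ_{j ≠ i} E[w_j]`.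
-/

open MeasureTheory Real

/-- Density of the `N(m, I_d)` Gaussian on `ℝ^d`. -/
noncomputable def gaussDensity {d : ℕ} (m x : EuclideanSpace ℝ (Fin d)) : ℝ :=
  (2 * Real.pi) ^ (-(d : ℝ) / 2) * Real.exp (-‖x - m‖ ^ 2 / 2)

/-- EM posterior membership weight of component `j` given candidate centers `μ`. -/
noncomputable def wEM {d K : ℕ} (p : Fin K → ℝ) (μ : Fin K → EuclideanSpace ℝ (Fin d))
    (j : Fin K) (x : EuclideanSpace ℝ (Fin d)) : ℝ :=
  p j * Real.exp (-‖x - μ j‖ ^ 2 / 2) / ∑ k, p k * Real.exp (-‖x - μ k‖ ^ 2 / 2)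

/-- `R_k = min_{j ≠ k} ‖μ_j* - μ_k*‖`. -/
noncomputable def Rsep {d K : ℕ} (μs : Fin K → EuclideanSpace ℝ (Fin d)) (k : Fin K) : ℝ :=
  sInf {r | ∃ j, j ≠ k ∧ r = ‖μs j - μs k‖}

/-- `R_min = min_{i ≠ j} ‖μ_i* - μ_j*‖`. -/
noncomputable def Rmin {d K : ℕ} (μs : Fin K → EuclideanSpace ℝ (Fin d)) : ℝ :=
  sInf {r | ∃ i j, i ≠ j ∧ r = ‖μs i - μs j‖}

/-- `θ = π_max / π_min`. -/
noncomputable def thetaRatio {K : ℕ} (p : Fin K → ℝ) : ℝ :=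
  sSup (Set.range p) / sInf (Set.range p)

/-- The exponent constant `c(λ)`. -/
noncomputable def clam (lam : ℝ) : ℝ := (1 / 8) * ((1 - 2 * lam) / (1 + 2 * lam)) ^ 2


section Gaussian

variable {d : ℕ}

lemma gaussDensity_pos (m x : EuclideanSpace ℝ (Fin d)) : 0 < gaussDensity m x := by
  unfold gaussDensity; positivity

lemma continuous_gaussDensity (m : EuclideanSpace ℝ (Fin d)) : Continuous (gaussDensity m) := by
  unfold gaussDensity; fun_prop

lemma integrable_gaussDensity (m : EuclideanSpace ℝ (Fin d)) : Integrable (gaussDensity m) := by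
  have h : Integrable (fun x : EuclideanSpace ℝ (Fin d) => exp (-(1 / 2) * ‖x‖ ^ 2)) := by
    convert (GaussianFourier.integrable_cexp_neg_mul_sq_norm_add
      (V := EuclideanSpace ℝ (Fin d)) (b := (1 / 2 : ℂ)) (by norm_num) 0 0).norm using 2 with x
    simp [Complex.norm_exp]
    norm_cast
  refine ((h.comp_sub_right m).const_mul ((2 * π) ^ (-(d : ℝ) / 2))).congr
    (ae_of_all _ fun x => ?_)
  simp only [gaussDensity]
  ring_nf

lemma integral_gaussDensity (m : EuclideanSpace ℝ (Fin d)) : ∫ x, gaussDensity m x = 1 := by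
  have h := GaussianFourier.integral_rexp_neg_mul_sq_norm
    (V := EuclideanSpace ℝ (Fin d)) (b := 1 / 2) (by norm_num)
  rw [finrank_euclideanSpace_fin] at h
  unfold gaussDensity
  rw [integral_const_mul, integral_sub_right_eq_self (fun x => exp (-‖x‖ ^ 2 / 2)) m]
  have h' : ∫ x : EuclideanSpace ℝ (Fin d), exp (-‖x‖ ^ 2 / 2) = (2 * π) ^ ((d : ℝ) / 2) := by
    convert h using 1
    · congr 1 with x; ring_nf
    · ring_nf
  rw [h', ← rpow_add (by positivity), neg_div, neg_add_cancel, rpow_zero]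

lemma exp_inner_mul_gaussDensity (m a x : EuclideanSpace ℝ (Fin d)) :
    exp (inner ℝ (x - m) a) * gaussDensity m x = exp (‖a‖ ^ 2 / 2) * gaussDensity (m + a) x := by
  have h : ‖x - (m + a)‖ ^ 2 = ‖x - m‖ ^ 2 - 2 * inner ℝ (x - m) a + ‖a‖ ^ 2 := by
    rw [← sub_sub, norm_sub_sq_real]
  unfold gaussDensity
  rw [mul_left_comm, mul_left_comm (exp _), ← exp_add, ← exp_add, h]
  ring_nf

end Gaussian

lemma sq_norm_sub_sub_sq_norm_sub {E : Type*} [NormedAddCommGroup E] [InnerProductSpace ℝ E]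
    (x c a b : E) :
    (‖x - a‖ ^ 2 - ‖x - b‖ ^ 2) / 2 = inner ℝ (x - c) (b - a) + (‖c - a‖ ^ 2 - ‖c - b‖ ^ 2) / 2 := by
  have ha := norm_add_sq_real (x - c) (c - a)
  have hb := norm_add_sq_real (x - c) (c - b)
  rw [sub_add_sub_cancel] at ha hb
  rw [ha, hb, show b - a = (c - a) - (c - b) by abel, inner_sub_right (x - c) (c - a) (c - b)]
  ring

section Weights

variable {d K : ℕ} {p : Fin K → ℝ} (μ : Fin K → EuclideanSpace ℝ (Fin d))

lemma sum_weighted_exp_pos (hp : ∀ k, 0 < p k) (i : Fin K) (x : EuclideanSpace ℝ (Fin d)) :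
    0 < ∑ k, p k * exp (-‖x - μ k‖ ^ 2 / 2) :=
  Finset.sum_pos (fun k _ => mul_pos (hp k) (exp_pos _)) ⟨i, Finset.mem_univ i⟩

lemma weighted_exp_le_sum (hp : ∀ k, 0 < p k) (i : Fin K) (x : EuclideanSpace ℝ (Fin d)) :
    p i * exp (-‖x - μ i‖ ^ 2 / 2) ≤ ∑ k, p k * exp (-‖x - μ k‖ ^ 2 / 2) :=
  Finset.single_le_sum (f := fun k => p k * exp (-‖x - μ k‖ ^ 2 / 2))
    (fun k _ => (mul_pos (hp k) (exp_pos _)).le) (Finset.mem_univ i)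

lemma wEM_pos (hp : ∀ k, 0 < p k) (j : Fin K) (x : EuclideanSpace ℝ (Fin d)) :
    0 < wEM p μ j x :=
  div_pos (mul_pos (hp j) (exp_pos _)) (sum_weighted_exp_pos μ hp j x)

lemma wEM_le_one (hp : ∀ k, 0 < p k) (j : Fin K) (x : EuclideanSpace ℝ (Fin d)) :
    wEM p μ j x ≤ 1 :=
  (div_le_one (sum_weighted_exp_pos μ hp j x)).2 (weighted_exp_le_sum μ hp j x)

lemma sum_wEM (hp : ∀ k, 0 < p k) [Nonempty (Fin K)] (x : EuclideanSpace ℝ (Fin d)) :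
    ∑ j, wEM p μ j x = 1 := by
  obtain ⟨i⟩ := ‹Nonempty (Fin K)›
  unfold wEM
  rw [← Finset.sum_div]
  exact div_self (sum_weighted_exp_pos μ hp i x).ne'

lemma continuous_wEM (hp : ∀ k, 0 < p k) (j : Fin K) : Continuous (wEM p μ j) :=
  Continuous.div (by fun_prop) (by fun_prop) fun x => (sum_weighted_exp_pos μ hp j x).ne'

lemma integrable_wEM_mul_gaussDensity (hp : ∀ k, 0 < p k) (j : Fin K)
    (c : EuclideanSpace ℝ (Fin d)) : Integrable (fun x => wEM p μ j x * gaussDensity c x) := by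
  refine (integrable_gaussDensity c).mono'
    ((continuous_wEM μ hp j).mul (continuous_gaussDensity c)).aestronglyMeasurable
    (ae_of_all _ fun x => ?_)
  rw [norm_mul, Real.norm_of_nonneg (wEM_pos μ hp j x).le,
    Real.norm_of_nonneg (gaussDensity_pos c x).le]
  exact mul_le_of_le_one_left (gaussDensity_pos c x).le (wEM_le_one μ hp j x)

lemma integral_wEM_mul_gaussDensity_eq (hp : ∀ k, 0 < p k) (i : Fin K)
    (c : EuclideanSpace ℝ (Fin d)) :
    ∫ x, wEM p μ i x * gaussDensity c x =
      1 - ∑ j ∈ Finset.univ.erase i, ∫ x, wEM p μ j x * gaussDensity c x := by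
  have : Nonempty (Fin K) := ⟨i⟩
  have htotal : ∑ j, ∫ x, wEM p μ j x * gaussDensity c x = 1 := by
    rw [← integral_finsetSum _ fun j _ => integrable_wEM_mul_gaussDensity μ hp j c]
    simp only [← Finset.sum_mul, sum_wEM μ hp, one_mul, integral_gaussDensity]
  rw [← htotal, ← Finset.add_sum_erase _ _ (Finset.mem_univ i), add_sub_cancel_right]

/-- Since `wEM ∈ (0, 1]`, the power `β ≤ 1` only increases it; after the power the likelihood
ratio is `exp` of an affine function of `x`, which a Gaussian tilt integrates exactly. -/
lemma wEM_le_rpow_ratio (hp : ∀ k, 0 < p k) {β : ℝ} (hβ0 : 0 ≤ β) (hβ1 : β ≤ 1)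
    (i j : Fin K) (x : EuclideanSpace ℝ (Fin d)) :
    wEM p μ j x ≤ (p j / p i) ^ β * exp (β * ((‖x - μ i‖ ^ 2 - ‖x - μ j‖ ^ 2) / 2)) := by
  have hratio : wEM p μ j x ≤ p j / p i * exp ((‖x - μ i‖ ^ 2 - ‖x - μ j‖ ^ 2) / 2) := by
    calc wEM p μ j x ≤ p j * exp (-‖x - μ j‖ ^ 2 / 2) / (p i * exp (-‖x - μ i‖ ^ 2 / 2)) :=
          div_le_div_of_nonneg_left (mul_pos (hp j) (exp_pos _)).le
            (mul_pos (hp i) (exp_pos _)) (weighted_exp_le_sum μ hp i x)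
      _ = _ := by rw [mul_div_mul_comm, ← exp_sub]; ring_nf
  calc wEM p μ j x = wEM p μ j x ^ (1 : ℝ) := (rpow_one _).symm
    _ ≤ wEM p μ j x ^ β := rpow_le_rpow_of_exponent_ge (wEM_pos μ hp j x) (wEM_le_one μ hp j x) hβ1
    _ ≤ (p j / p i * exp ((‖x - μ i‖ ^ 2 - ‖x - μ j‖ ^ 2) / 2)) ^ β :=
        rpow_le_rpow (wEM_pos μ hp j x).le hratio hβ0
    _ = _ := by
        rw [mul_rpow (div_pos (hp j) (hp i)).le (exp_pos _).le, ← exp_mul, mul_comm β]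

lemma integral_wEM_mul_gaussDensity_le (hp : ∀ k, 0 < p k) {β : ℝ} (hβ0 : 0 ≤ β) (hβ1 : β ≤ 1)
    (i j : Fin K) (c : EuclideanSpace ℝ (Fin d)) :
    ∫ x, wEM p μ j x * gaussDensity c x ≤
      (p j / p i) ^ β *
        exp (β * ((‖c - μ i‖ ^ 2 - ‖c - μ j‖ ^ 2) / 2) + β ^ 2 * ‖μ j - μ i‖ ^ 2 / 2) := by
  set C := (p j / p i) ^ β *
    exp (β * ((‖c - μ i‖ ^ 2 - ‖c - μ j‖ ^ 2) / 2) + β ^ 2 * ‖μ j - μ i‖ ^ 2 / 2)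
  have hpoint : ∀ x, wEM p μ j x * gaussDensity c x ≤
      C * gaussDensity (c + β • (μ j - μ i)) x := fun x => by
    have htilt := exp_inner_mul_gaussDensity c (β • (μ j - μ i)) x
    rw [norm_smul, mul_pow, Real.norm_eq_abs, sq_abs, real_inner_smul_right] at htilt
    calc wEM p μ j x * gaussDensity c x
        ≤ (p j / p i) ^ β * exp (β * ((‖x - μ i‖ ^ 2 - ‖x - μ j‖ ^ 2) / 2)) * gaussDensity c x :=
          mul_le_mul_of_nonneg_right (wEM_le_rpow_ratio μ hp hβ0 hβ1 i j x)
            (gaussDensity_pos c x).le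
      _ = (p j / p i) ^ β * exp (β * ((‖c - μ i‖ ^ 2 - ‖c - μ j‖ ^ 2) / 2)) *
            (exp (β * inner ℝ (x - c) (μ j - μ i)) * gaussDensity c x) := by
          rw [sq_norm_sub_sub_sq_norm_sub x c, mul_add, exp_add]; ring
      _ = C * gaussDensity (c + β • (μ j - μ i)) x := by
          rw [htilt]; simp only [C, exp_add]; ring
  calc ∫ x, wEM p μ j x * gaussDensity c x
      ≤ ∫ x, C * gaussDensity (c + β • (μ j - μ i)) x :=
        integral_mono (integrable_wEM_mul_gaussDensity μ hp j c)
          ((integrable_gaussDensity _).const_mul C) hpoint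
    _ = C := by rw [integral_const_mul, integral_gaussDensity, mul_one]

end Weights

lemma Rsep_nonneg {d K : ℕ} (μs : Fin K → EuclideanSpace ℝ (Fin d)) (k : Fin K) : 0 ≤ Rsep μs k :=
  Real.sInf_nonneg (by rintro r ⟨j, -, rfl⟩; positivity)

lemma Rsep_le_norm {d K : ℕ} (μs : Fin K → EuclideanSpace ℝ (Fin d)) {j k : Fin K} (hjk : j ≠ k) :
    Rsep μs k ≤ ‖μs j - μs k‖ :=
  csInf_le ⟨0, by rintro r ⟨j', -, rfl⟩; positivity⟩ ⟨j, hjk, rfl⟩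

lemma div_le_thetaRatio {K : ℕ} {p : Fin K → ℝ} (hp : ∀ k, 0 < p k) (i j : Fin K) :
    p j / p i ≤ thetaRatio p := by
  have hfin := Set.finite_range p
  obtain ⟨k, hk⟩ := (Set.range_nonempty_iff_nonempty.2 ⟨i⟩).csInf_mem hfin
  have hinf : 0 < sInf (Set.range p) := hk ▸ hp k
  exact div_le_div₀ ((hp j).le.trans (le_csSup hfin.bddAbove ⟨j, rfl⟩))
    (le_csSup hfin.bddAbove ⟨j, rfl⟩) hinf (csInf_le hfin.bddBelow ⟨i, rfl⟩)

lemma one_le_thetaRatio {K : ℕ} {p : Fin K → ℝ} (hp : ∀ k, 0 < p k) (i : Fin K) :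
    1 ≤ thetaRatio p := by
  simpa only [div_self (hp i).ne'] using div_le_thetaRatio hp i i

lemma rpow_div_le_thetaRatio {K : ℕ} {p : Fin K → ℝ} (hp : ∀ k, 0 < p k) {β : ℝ}
    (hβ0 : 0 ≤ β) (hβ1 : β ≤ 1) (i j : Fin K) : (p j / p i) ^ β ≤ thetaRatio p := by
  calc (p j / p i) ^ β ≤ thetaRatio p ^ β :=
        rpow_le_rpow (div_pos (hp j) (hp i)).le (div_le_thetaRatio hp i j) hβ0
    _ ≤ thetaRatio p ^ (1 : ℝ) := rpow_le_rpow_of_exponent_le (one_le_thetaRatio hp i) hβ1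
    _ = thetaRatio p := rpow_one _

/-- Half the minimiser in `β` of the left side of `tilt_exponent_le` at the extreme values of
`a, b, s`; this choice produces exactly `c(λ)`. -/
noncomputable def tiltSize (lam : ℝ) : ℝ := (1 - 2 * lam) / (2 * (1 + 2 * lam) ^ 2)

lemma tiltSize_nonneg {lam : ℝ} (hl2 : lam < 1 / 2) : 0 ≤ tiltSize lam :=
  div_nonneg (by linarith) (by positivity)

lemma tiltSize_le_one {lam : ℝ} (hl1 : 0 ≤ lam) : tiltSize lam ≤ 1 := by
  unfold tiltSize
  rw [div_le_one (by positivity)]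
  nlinarith [hl1]

lemma tilt_exponent_le {lam D a b s : ℝ} (hl1 : 0 ≤ lam) (hl2 : lam < 1 / 2) (hD : 0 ≤ D)
    (ha0 : 0 ≤ a) (ha : a ≤ lam * D) (hb : (1 - lam) * D ≤ b) (hs0 : 0 ≤ s)
    (hs : s ≤ (1 + 2 * lam) * D) :
    tiltSize lam * ((a ^ 2 - b ^ 2) / 2) + tiltSize lam ^ 2 * s ^ 2 / 2 ≤ -clam lam * D ^ 2 := by
  have hβ := tiltSize_nonneg hl2
  have hab : a ^ 2 - b ^ 2 ≤ -(1 - 2 * lam) * D ^ 2 := by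
    nlinarith [pow_le_pow_left₀ ha0 ha 2, pow_le_pow_left₀ (by nlinarith) hb 2]
  have hs2 : s ^ 2 ≤ (1 + 2 * lam) ^ 2 * D ^ 2 := by
    nlinarith [pow_le_pow_left₀ hs0 hs 2]
  have hval : tiltSize lam * (-(1 - 2 * lam) * D ^ 2 / 2) +
      tiltSize lam ^ 2 * ((1 + 2 * lam) ^ 2 * D ^ 2) / 2 = -clam lam * D ^ 2 := by
    unfold tiltSize clam
    field_simp
    ring
  linarith [mul_le_mul_of_nonneg_left hab hβ,
    mul_le_mul_of_nonneg_left hs2 (sq_nonneg (tiltSize lam))]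

lemma tilt_exponent_le_of_near {d K : ℕ} {μs μ : Fin K → EuclideanSpace ℝ (Fin d)} {lam : ℝ}
    (hl1 : 0 ≤ lam) (hl2 : lam < 1 / 2) (hU : ∀ k, ‖μ k - μs k‖ ≤ lam * Rsep μs k)
    {i j : Fin K} (hji : j ≠ i) :
    tiltSize lam * ((‖μs i - μ i‖ ^ 2 - ‖μs i - μ j‖ ^ 2) / 2) +
      tiltSize lam ^ 2 * ‖μ j - μ i‖ ^ 2 / 2 ≤ -clam lam * Rsep μs i ^ 2 := by
  set D := ‖μs j - μs i‖
  have hRi : lam * Rsep μs i ≤ lam * D := mul_le_mul_of_nonneg_left (Rsep_le_norm μs hji) hl1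
  have hRj : lam * Rsep μs j ≤ lam * D :=
    mul_le_mul_of_nonneg_left ((Rsep_le_norm μs hji.symm).trans_eq (norm_sub_rev _ _)) hl1
  have hi := hU i
  have hj := hU j
  have ha : ‖μs i - μ i‖ ≤ lam * D := by rw [norm_sub_rev]; linarith
  have hb : (1 - lam) * D ≤ ‖μs i - μ j‖ := by
    have : D ≤ ‖μs i - μ j‖ + ‖μ j - μs j‖ :=
      (norm_sub_rev _ _).trans_le (norm_sub_le_norm_sub_add_norm_sub _ _ _)
    linarith
  have hs : ‖μ j - μ i‖ ≤ (1 + 2 * lam) * D := by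
    have := norm_sub_le_norm_sub_add_norm_sub (μ j) (μs j) (μ i)
    have : ‖μs j - μ i‖ ≤ D + ‖μs i - μ i‖ := norm_sub_le_norm_sub_add_norm_sub _ _ _
    linarith
  have hR2 : Rsep μs i ^ 2 ≤ D ^ 2 := pow_le_pow_left₀ (Rsep_nonneg μs i) (Rsep_le_norm μs hji) 2
  have hc : 0 ≤ clam lam := by unfold clam; positivity
  calc _ ≤ -clam lam * D ^ 2 :=
        tilt_exponent_le hl1 hl2 (norm_nonneg _) (norm_nonneg _) ha hb (norm_nonneg _) hs
    _ ≤ -clam lam * Rsep μs i ^ 2 := by nlinarith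

theorem stmt7_general {d K : ℕ} (μs μ : Fin K → EuclideanSpace ℝ (Fin d)) (p : Fin K → ℝ)
    (lam : ℝ) (hl1 : 0 < lam) (hl2 : lam < 1 / 2)
    (hp : ∀ k, 0 < p k)
    (hU : ∀ k, ‖μ k - μs k‖ ≤ lam * Rsep μs k) :
    ∀ i, (∫ x, wEM p μ i x * gaussDensity (μs i) x) ≥
      1 - ((K : ℝ) - 1) * (1 + thetaRatio p) *
        Real.exp (-(clam lam) * (Rsep μs i) ^ 2) := by
  intro i
  set bound := thetaRatio p * exp (-clam lam * Rsep μs i ^ 2)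
  have hβ0 := tiltSize_nonneg hl2
  have hβ1 := tiltSize_le_one hl1.le
  have hcross : ∀ j ∈ Finset.univ.erase i, ∫ x, wEM p μ j x * gaussDensity (μs i) x ≤ bound :=
    fun j hj => (integral_wEM_mul_gaussDensity_le μ hp hβ0 hβ1 i j (μs i)).trans <|
      mul_le_mul (rpow_div_le_thetaRatio hp hβ0 hβ1 i j)
        (exp_le_exp.2 (tilt_exponent_le_of_near hl1.le hl2 hU (Finset.ne_of_mem_erase hj)))
        (exp_pos _).le (zero_le_one.trans (one_le_thetaRatio hp i))
  have hcard : ((Finset.univ.erase i).card : ℝ) = K - 1 := by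
    rw [Finset.card_erase_of_mem (Finset.mem_univ i), Finset.card_univ, Fintype.card_fin,
      Nat.cast_sub (Fin.pos i), Nat.cast_one]
  have hK : (0 : ℝ) ≤ K - 1 := by rw [← hcard]; positivity
  rw [ge_iff_le, integral_wEM_mul_gaussDensity_eq μ hp i (μs i), sub_le_sub_iff_left]
  calc _ ≤ ∑ _j ∈ Finset.univ.erase i, bound := Finset.sum_le_sum hcross
    _ = (K - 1) * bound := by rw [Finset.sum_const, nsmul_eq_mul, hcard]
    _ ≤ _ := by
        rw [mul_assoc]
        gcongr
        linarith [exp_pos (-clam lam * Rsep μs i ^ 2)]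

theorem stmt7 {d K : ℕ} (μs μ : Fin K → EuclideanSpace ℝ (Fin d)) (p : Fin K → ℝ)
    (lam : ℝ) (hl1 : 0 < lam) (hl2 : lam < 1 / 2)
    (hp : ∀ k, 0 < p k) (hps : ∑ k, p k = 1)
    (hsep : Rmin μs > Real.sqrt ((2 / (1 - 2 * lam)) * Real.log (thetaRatio p)))
    (hU : ∀ k, ‖μ k - μs k‖ ≤ lam * Rsep μs k) :
    ∀ i, (∫ x, wEM p μ i x * gaussDensity (μs i) x) ≥
      1 - ((K : ℝ) - 1) * (1 + thetaRatio p) *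
        Real.exp (-(clam lam) * (Rsep μs i) ^ 2) :=
  stmt7_general μs μ p lam hl1 hl2 hp hU
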